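/- arXiv:1507.04722 — 7 statements merged into one kernel-verified Lean document; each statement's English description precedes it below -/
import Mathlib

section
/- Let P be a polynomial with real coefficients and let g : ℝ → ℝ be infinitely differentiable and satisfy, for all ξ ∈ ℝ, (g′(ξ))² = P(g(ξ)) together with g″(ξ) = (1/2)·P′(g(ξ)). Then for every integer i ≥ 1 and every natural number λ there exists a polynomial B with real coefficients such that for all ξ ∈ ℝ, (g⁽ⁱ⁾(ξ))^λ = B(g(ξ))·(g′(ξ))^ε, where ε = 1 if both i and λ are odd and ε = 0 otherwise. -/
theorem stmt1 (P : Polynomial ℝ) (g : ℝ → ℝ)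
    (hg : ContDiff ℝ (⊤ : ℕ∞) g)
    (h1 : ∀ ξ : ℝ, (deriv g ξ) ^ 2 = P.eval (g ξ))
    (h2 : ∀ ξ : ℝ, deriv (deriv g) ξ = (1 / 2) * (Polynomial.derivative P).eval (g ξ)) :
    ∀ i : ℕ, 1 ≤ i → ∀ lam : ℕ,
      ∃ B : Polynomial ℝ, ∀ ξ : ℝ,
        (iteratedDeriv i g ξ) ^ lam =
          B.eval (g ξ) * (deriv g ξ) ^ (if Odd i ∧ Odd lam then 1 else 0) := by
  have hgd : Differentiable ℝ g := hg.differentiable (by simp)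
  have hg'd : Differentiable ℝ (deriv g) := by
    have h2' : ContDiff ℝ (⊤ : ℕ∞) g := hg.of_le (by simp)
    exact ((contDiff_infty_iff_deriv.mp h2').2).differentiable (by simp)
  have key : ∀ i : ℕ, 1 ≤ i → ∃ Q : Polynomial ℝ, ∀ ξ : ℝ,
      iteratedDeriv i g ξ = Q.eval (g ξ) * (deriv g ξ) ^ (if Odd i then 1 else 0) := by
    intro i hi
    induction i with
    | zero => omega
    | succ n ih =>
      rcases Nat.lt_or_ge n 1 with h | hn
      · have hn0 : n = 0 := by omega
        subst hn0
        exact ⟨1, fun ξ => by simp [iteratedDeriv_one]⟩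
      · obtain ⟨Q, hQ⟩ := ih hn
        by_cases hodd : Odd n
        · have hne : ¬ Odd (n + 1) := by
            simp [Nat.odd_add_one, Nat.not_even_iff_odd, hodd]
          refine ⟨Polynomial.derivative Q * P +
            Polynomial.C (1/2) * Q * Polynomial.derivative P, fun ξ => ?_⟩
          rw [iteratedDeriv_succ]
          have hfun : iteratedDeriv n g = fun x => Q.eval (g x) * deriv g x := by
            funext x; rw [hQ x]; simp [hodd]
          rw [hfun]
          have hd : HasDerivAt (fun x => Q.eval (g x) * deriv g x)
              ((Polynomial.derivative Q).eval (g ξ) * deriv g ξ * deriv g ξ +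
               Q.eval (g ξ) * deriv (deriv g) ξ) ξ :=
            ((Q.hasDerivAt (g ξ)).comp ξ (hgd ξ).hasDerivAt).mul (hg'd ξ).hasDerivAt
          rw [hd.deriv]
          have e1 : (Polynomial.derivative Q).eval (g ξ) * deriv g ξ * deriv g ξ
              = (Polynomial.derivative Q).eval (g ξ) * P.eval (g ξ) := by
            rw [mul_assoc, ← sq, h1]
          rw [e1, h2, if_neg hne]
          simp [Polynomial.eval_mul, Polynomial.eval_add]
          ring
        · have hne : Odd (n + 1) := by
            rcases Nat.even_or_odd n with he | ho
            · exact Even.add_one he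
            · exact absurd ho hodd
          refine ⟨Polynomial.derivative Q, fun ξ => ?_⟩
          rw [iteratedDeriv_succ]
          have hfun : iteratedDeriv n g = fun x => Q.eval (g x) := by
            funext x; rw [hQ x]; simp [hodd]
          rw [hfun]
          have hd : HasDerivAt (fun x => Q.eval (g x))
              ((Polynomial.derivative Q).eval (g ξ) * deriv g ξ) ξ :=
            (Q.hasDerivAt (g ξ)).comp ξ (hgd ξ).hasDerivAt
          rw [hd.deriv, if_pos hne, pow_one]
  intro i hi lam
  obtain ⟨Q, hQ⟩ := key i hi
  by_cases hoi : Odd i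
  · by_cases hol : Odd lam
    · obtain ⟨k, hk⟩ := hol
      refine ⟨Q ^ lam * P ^ k, fun ξ => ?_⟩
      rw [hQ ξ, if_pos hoi, if_pos ⟨hoi, ⟨k, hk⟩⟩, pow_one, mul_pow]
      have e : deriv g ξ ^ lam = P.eval (g ξ) ^ k * deriv g ξ := by
        rw [hk, pow_succ, pow_mul, h1]
      rw [e]
      simp only [Polynomial.eval_mul, Polynomial.eval_pow]
      ring
    · refine ⟨Q ^ lam * P ^ (lam / 2), fun ξ => ?_⟩
      rw [hQ ξ, if_pos hoi, if_neg (by tauto), pow_one, pow_zero, mul_one, mul_pow]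
      have e : deriv g ξ ^ lam = P.eval (g ξ) ^ (lam / 2) := by
        have h2l : 2 * (lam / 2) = lam := by
          obtain ⟨m, hm⟩ := Nat.not_odd_iff_even.mp hol
          omega
        calc deriv g ξ ^ lam = (deriv g ξ ^ 2) ^ (lam / 2) := by
              rw [← pow_mul, h2l]
          _ = P.eval (g ξ) ^ (lam / 2) := by rw [h1]
      rw [e]
      simp [Polynomial.eval_mul, Polynomial.eval_pow]
  · refine ⟨Q ^ lam, fun ξ => ?_⟩
    rw [hQ ξ, if_neg hoi, if_neg (by tauto)]
    simp [Polynomial.eval_pow, mul_pow]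
end

section
/- Let P be a polynomial with real coefficients and let g : ℝ → ℝ be infinitely differentiable and satisfy, for all ξ ∈ ℝ, (g′(ξ))² = P(g(ξ)) together with g″(ξ) = (1/2)·P′(g(ξ)). Let f be a polynomial with real coefficients and set h(ξ) = f(g(ξ)). Then for every natural number n there exist polynomials Kₙ and Zₙ with real coefficients such that for all ξ ∈ ℝ the n-th derivative of h satisfies h⁽ⁿ⁾(ξ) = Kₙ(g(ξ)) + Zₙ(g(ξ))·g′(ξ). -/
theorem stmt2 (P f : Polynomial ℝ) (g : ℝ → ℝ)
    (hg : ContDiff ℝ (⊤ : ℕ∞) g)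
    (h1 : ∀ ξ : ℝ, (deriv g ξ) ^ 2 = P.eval (g ξ))
    (h2 : ∀ ξ : ℝ, deriv (deriv g) ξ = (1 / 2) * (Polynomial.derivative P).eval (g ξ))
    (h : ℝ → ℝ) (hh : ∀ ξ : ℝ, h ξ = f.eval (g ξ)) :
    ∀ n : ℕ, ∃ K Z : Polynomial ℝ, ∀ ξ : ℝ,
      iteratedDeriv n h ξ = K.eval (g ξ) + Z.eval (g ξ) * deriv g ξ := by
  have hgd : Differentiable ℝ g := hg.differentiable (by simp)
  have hg'd : Differentiable ℝ (deriv g) :=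
    ((contDiff_infty_iff_deriv.mp (hg.of_le (by simp))).2.differentiable (by simp))
  intro n
  induction n with
  | zero => exact ⟨f, 0, fun ξ => by simp [hh ξ]⟩
  | succ n ih =>
    obtain ⟨K, Z, hKZ⟩ := ih
    refine ⟨Polynomial.derivative Z * P + Polynomial.C (1/2) * Z * Polynomial.derivative P,
      Polynomial.derivative K, fun ξ => ?_⟩
    rw [iteratedDeriv_succ]
    have heq : deriv (iteratedDeriv n h) ξ
        = deriv (fun x => K.eval (g x) + Z.eval (g x) * deriv g x) ξ := by
      congr 1; funext x; exact hKZ x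
    rw [heq]
    have hK : HasDerivAt (fun x => K.eval (g x))
        ((Polynomial.derivative K).eval (g ξ) * deriv g ξ) ξ :=
      (K.hasDerivAt (g ξ)).comp ξ (hgd ξ).hasDerivAt
    have hZ : HasDerivAt (fun x => Z.eval (g x))
        ((Polynomial.derivative Z).eval (g ξ) * deriv g ξ) ξ :=
      (Z.hasDerivAt (g ξ)).comp ξ (hgd ξ).hasDerivAt
    have hg'' : HasDerivAt (deriv g) (deriv (deriv g) ξ) ξ := (hg'd ξ).hasDerivAt
    rw [(show HasDerivAt (fun x => K.eval (g x) + Z.eval (g x) * deriv g x) _ ξ from hK.add (hZ.mul hg'')).deriv, h2 ξ]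
    have ha : deriv g ξ * deriv g ξ = P.eval (g ξ) := by rw [← sq]; exact h1 ξ
    simp only [Polynomial.eval_mul, Polynomial.eval_add, Polynomial.eval_C]
    linear_combination Polynomial.eval (g ξ) (Polynomial.derivative Z) * ha
end

section
/- Given real polynomials f and P, define sequences of real polynomials (Kₙ) and (Zₙ) by K₀ = f, Z₀ = 0, and for n ≥ 0: Zₙ₊₁ = Kₙ′ and Kₙ₊₁ = (1/2)·Zₙ·P′ + Zₙ′·P, where ′ denotes the polynomial derivative. Assume the degree of f is at most q, the degree of P is at most m, and m ≥ 2. Then for every natural number σ the degree of K₂σ is at most q + σ(m − 2), and the degree of Z₂σ₊₁ is at most q + σ(m − 2) − 1 (the bound for Z₂σ₊₁ being read in the natural numbers with truncated subtraction). -/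
/-!
Every pass `K ↦ K (n + 2)` of the recursion differentiates twice in total while multiplying by
`P` or `P'`, so it raises the degree by at most `deg P - 2`; a derivative never raises it.
-/

open Polynomial

namespace Polynomial

variable {R : Type*} [CommSemiring R]

theorem natDegree_iterate_derivative_mul_iterate_derivative_le (p q : R[X]) (i j : ℕ) :
    (derivative^[i] p * derivative^[j] q).natDegree ≤ p.natDegree + q.natDegree - (i + j) := by
  rcases lt_or_ge p.natDegree i with hi | hi
  · simp [iterate_derivative_eq_zero hi]
  rcases lt_or_ge q.natDegree j with hj | hj
  · simp [iterate_derivative_eq_zero hj]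
  have hp := natDegree_iterate_derivative p i
  have hq := natDegree_iterate_derivative q j
  have := natDegree_mul_le (p := derivative^[i] p) (q := derivative^[j] q)
  omega

theorem natDegree_C_mul_derivative_mul_derivative_add_le (c : R) (A P : R[X]) :
    (C c * derivative A * derivative P + derivative (derivative A) * P).natDegree ≤
      A.natDegree + P.natDegree - 2 := by
  apply natDegree_add_le_of_degree_le
  · rw [mul_assoc]
    exact (natDegree_C_mul_le _ _).trans
      (natDegree_iterate_derivative_mul_iterate_derivative_le A P 1 1)
  · exact natDegree_iterate_derivative_mul_iterate_derivative_le A P 2 0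

end Polynomial

theorem stmt5_general (f P : Polynomial ℝ) (q m : ℕ) (K Z : ℕ → Polynomial ℝ)
    (hK0 : K 0 = f)
    (hZ : ∀ n : ℕ, Z (n + 1) = Polynomial.derivative (K n))
    (hK : ∀ n : ℕ, K (n + 1) =
      Polynomial.C (1 / 2 : ℝ) * Z n * Polynomial.derivative P
        + Polynomial.derivative (Z n) * P)
    (hf : f.natDegree ≤ q) (hP : P.natDegree ≤ m) :
    ∀ σ : ℕ, (K (2 * σ)).natDegree ≤ q + σ * (m - 2) ∧
      (Z (2 * σ + 1)).natDegree ≤ q + σ * (m - 2) - 1 := by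
  have hKeven : ∀ σ : ℕ, (K (2 * σ)).natDegree ≤ q + σ * (m - 2) := by
    intro σ
    induction σ with
    | zero => simpa [hK0] using hf
    | succ σ ih =>
      rw [show 2 * (σ + 1) = 2 * σ + 1 + 1 by ring, hK, hZ, add_one_mul]
      have := natDegree_C_mul_derivative_mul_derivative_add_le (1 / 2 : ℝ) (K (2 * σ)) P
      omega
  intro σ
  have hKσ := hKeven σ
  have hZσ := natDegree_derivative_le (K (2 * σ))
  rw [hZ]
  exact ⟨hKσ, by omega⟩

theorem stmt5 (f P : Polynomial ℝ) (q m : ℕ) (K Z : ℕ → Polynomial ℝ)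
    (hK0 : K 0 = f) (hZ0 : Z 0 = 0)
    (hZ : ∀ n : ℕ, Z (n + 1) = Polynomial.derivative (K n))
    (hK : ∀ n : ℕ, K (n + 1) =
      Polynomial.C (1 / 2 : ℝ) * Z n * Polynomial.derivative P
        + Polynomial.derivative (Z n) * P)
    (hf : f.natDegree ≤ q) (hP : P.natDegree ≤ m) (hm : 2 ≤ m) :
    ∀ σ : ℕ, (K (2 * σ)).natDegree ≤ q + σ * (m - 2) ∧
      (Z (2 * σ + 1)).natDegree ≤ q + σ * (m - 2) - 1 :=
  stmt5_general f P q m K Z hK0 hZ hK hf hP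
end

section
/- Let p be a nonzero real number, and let A, Ω, b₁, μ, ν be real numbers with Ω > 0, b₁ > 0, μ² = p²·A·Ω^p·b₁^p / (2(p+1)(p+2)) (in particular (p+1)(p+2) ≠ 0 and p²·A·Ω^p·b₁^p / (2(p+1)(p+2)) ≥ 0), and ν = −4μ³/p². Then the function u(x, t) = Ω·b₁ / (cosh(μx + νt))^{2/p}, with real-number powers, satisfies the generalized Korteweg–de Vries equation u_t + A·u^p·u_x + u_{xxx} = 0 for all (x, t) ∈ ℝ², where u^p is a real power (u > 0). -/
/-!
Writing `b = -2/p` and `C = Ω b₁`, the solution is the travelling wave `u = C · cosh(s)^b` with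
`s = μx + νt`, and `u^p = C^p · cosh(s)^(-2)`. Since
`(cosh^b)''' = b (b² cosh^(b-1) - (b-1)(b-2) cosh^(b-3)) sinh`, all three terms of the equation
are multiples of `C b cosh(s)^(b-1) sinh(s)`, and the equation splits into the two identities
`ν = -b² μ³` (the speed) and
`A C^p = μ² (b-1)(b-2) = 2 μ² (p+1)(p+2) / p²` (the amplitude).
-/

open Real

theorem iteratedDeriv_const_mul_comp_mul_add {𝕜 : Type*} [NontriviallyNormedField 𝕜] {n : ℕ}
    {f : 𝕜 → 𝕜} (hf : ContDiff 𝕜 n f) (c a k x : 𝕜) :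
    iteratedDeriv n (fun y => c * f (a * y + k)) x =
      c * (a ^ n * iteratedDeriv n f (a * x + k)) := by
  have hshift : ContDiff 𝕜 n (fun z => f (z + k)) := hf.comp (contDiff_id.add contDiff_const)
  rw [iteratedDeriv_const_mul_field, congrFun (iteratedDeriv_comp_const_mul hshift a) x,
    iteratedDeriv_comp_add_const]

theorem contDiff_cosh_rpow (c : ℝ) {n : WithTop ℕ∞} : ContDiff ℝ n (fun z => cosh z ^ c) :=
  contDiff_cosh.rpow_const_of_ne fun z => (cosh_pos z).ne'

theorem hasDerivAt_cosh_rpow (c z : ℝ) :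
    HasDerivAt (fun z => cosh z ^ c) (c * cosh z ^ (c - 1) * sinh z) z :=
  (hasDerivAt_rpow_const (Or.inl (cosh_pos z).ne')).comp z (hasDerivAt_cosh z)

theorem hasDerivAt_cosh_rpow_mul_sinh (c z : ℝ) :
    HasDerivAt (fun z => cosh z ^ c * sinh z)
      ((c + 1) * cosh z ^ (c + 1) - c * cosh z ^ (c - 1)) z := by
  refine ((hasDerivAt_cosh_rpow c z).mul (hasDerivAt_sinh z)).congr_deriv ?_
  have hpos := cosh_pos z
  have hsucc : cosh z ^ (c + 1) = cosh z ^ (c - 1) * cosh z ^ 2 := by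
    rw [← rpow_natCast, ← rpow_add hpos]; ring_nf
  have hpred : cosh z ^ c = cosh z ^ (c - 1) * cosh z := by
    rw [← rpow_add_one hpos.ne']; ring_nf
  rw [hsucc, hpred]
  linear_combination c * cosh z ^ (c - 1) * sinh_sq z

theorem deriv_const_mul_cosh_rpow_comp_mul_add (c b a k x : ℝ) :
    deriv (fun y => c * cosh (a * y + k) ^ b) x =
      c * (a * (b * cosh (a * x + k) ^ (b - 1) * sinh (a * x + k))) := by
  rw [← iteratedDeriv_one, iteratedDeriv_const_mul_comp_mul_add (contDiff_cosh_rpow b),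
    iteratedDeriv_one, (hasDerivAt_cosh_rpow b _).deriv, pow_one]

theorem iteratedDeriv_three_cosh_rpow (c : ℝ) :
    iteratedDeriv 3 (fun z => cosh z ^ c) = fun z =>
      c * (c ^ 2 * cosh z ^ (c - 1) - (c - 1) * (c - 2) * cosh z ^ (c - 3)) * sinh z := by
  have h1 : deriv (fun z => cosh z ^ c) = fun z => c * (cosh z ^ (c - 1) * sinh z) := by
    funext z; rw [(hasDerivAt_cosh_rpow c z).deriv]; ring
  have h2 : deriv (fun z => c * (cosh z ^ (c - 1) * sinh z)) =
      fun z => c * (c * cosh z ^ c - (c - 1) * cosh z ^ (c - 2)) := by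
    funext z
    rw [((hasDerivAt_cosh_rpow_mul_sinh (c - 1) z).const_mul c).deriv]; ring_nf
  have h3 : deriv (fun z => c * (c * cosh z ^ c - (c - 1) * cosh z ^ (c - 2))) = fun z =>
      c * (c ^ 2 * cosh z ^ (c - 1) - (c - 1) * (c - 2) * cosh z ^ (c - 3)) * sinh z := by
    funext z
    have hd : HasDerivAt (fun z => c * (c * cosh z ^ c - (c - 1) * cosh z ^ (c - 2))) _ z :=
      (((hasDerivAt_cosh_rpow c z).const_mul c).sub
        ((hasDerivAt_cosh_rpow (c - 2) z).const_mul (c - 1))).const_mul c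
    rw [hd.deriv]
    ring_nf
  rw [iteratedDeriv_succ, iteratedDeriv_succ, iteratedDeriv_one, h1, h2, h3]

theorem kdv_soliton_speed {p μ ν : ℝ} (hp : p ≠ 0) (hν : ν = -4 * μ ^ 3 / p ^ 2) :
    ν + (-(2 / p)) ^ 2 * μ ^ 3 = 0 := by
  rw [hν]; field_simp; ring

theorem kdv_soliton_amplitude {p A K μ : ℝ} (hp : p ≠ 0) (hne : (p + 1) * (p + 2) ≠ 0)
    (hμ : μ ^ 2 = p ^ 2 * A * K / (2 * (p + 1) * (p + 2))) :
    A * K * μ - μ ^ 3 * ((-(2 / p) - 1) * (-(2 / p) - 2)) = 0 := by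
  have hD : 2 * (p + 1) * (p + 2) ≠ 0 := by rw [mul_assoc]; exact mul_ne_zero two_ne_zero hne
  rw [eq_div_iff hD] at hμ
  field_simp
  linear_combination (-μ) * hμ

theorem stmt12_general (p A Ω b₁ μ ν : ℝ) (hp : p ≠ 0) (hΩ : 0 < Ω) (hb : 0 < b₁)
    (hne : (p + 1) * (p + 2) ≠ 0)
    (hμ : μ ^ 2 = p ^ 2 * A * Ω ^ p * b₁ ^ p / (2 * (p + 1) * (p + 2)))
    (hν : ν = -4 * μ ^ 3 / p ^ 2)
    (u : ℝ → ℝ → ℝ)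
    (hu : ∀ x t : ℝ, u x t = Ω * b₁ / (Real.cosh (μ * x + ν * t)) ^ (2 / p)) :
    ∀ x t : ℝ,
      deriv (fun τ => u x τ) t + A * (u x t) ^ p * deriv (fun y => u y t) x
        + iteratedDeriv 3 (fun y => u y t) x = 0 := by
  intro x t
  set b := -(2 / p) with hb_def
  set C := Ω * b₁
  set s := μ * x + ν * t
  have hwave : ∀ y τ, u y τ = C * cosh (μ * y + ν * τ) ^ b := fun y τ => by
    rw [hu, rpow_neg (cosh_pos _).le, div_eq_mul_inv]
  have hut : deriv (fun τ => u x τ) t = C * (ν * (b * cosh s ^ (b - 1) * sinh s)) := by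
    simp_rw [hwave, add_comm (μ * x)]
    rw [deriv_const_mul_cosh_rpow_comp_mul_add, add_comm]
  have hux : deriv (fun y => u y t) x = C * (μ * (b * cosh s ^ (b - 1) * sinh s)) := by
    simp_rw [hwave]
    rw [deriv_const_mul_cosh_rpow_comp_mul_add]
  have huxxx : iteratedDeriv 3 (fun y => u y t) x = C * (μ ^ 3 *
      (b * (b ^ 2 * cosh s ^ (b - 1) - (b - 1) * (b - 2) * cosh s ^ (b - 3)) * sinh s)) := by
    simp_rw [hwave]
    rw [iteratedDeriv_const_mul_comp_mul_add (contDiff_cosh_rpow b), iteratedDeriv_three_cosh_rpow]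
  have hup : u x t ^ p = Ω ^ p * b₁ ^ p * cosh s ^ (-2 : ℝ) := by
    rw [hwave, mul_rpow (by positivity) (by positivity), mul_rpow hΩ.le hb.le,
      ← rpow_mul (cosh_pos _).le, hb_def, neg_mul, div_mul_cancel₀ _ hp]
  have hsplit : cosh s ^ (b - 3) = cosh s ^ (b - 1) * cosh s ^ (-2 : ℝ) := by
    rw [← rpow_add (cosh_pos _)]; ring_nf
  have hspeed : ν + b ^ 2 * μ ^ 3 = 0 := kdv_soliton_speed hp hν
  have hamplitude : A * (Ω ^ p * b₁ ^ p) * μ - μ ^ 3 * ((b - 1) * (b - 2)) = 0 :=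
    kdv_soliton_amplitude hp hne (by rw [hμ]; ring)
  rw [hut, hux, huxxx, hup, hsplit]
  linear_combination (C * b * cosh s ^ (b - 1) * sinh s) * hspeed
    + (C * b * cosh s ^ (b - 1) * cosh s ^ (-2 : ℝ) * sinh s) * hamplitude

theorem stmt12 (p A Ω b₁ μ ν : ℝ) (hp : p ≠ 0) (hΩ : 0 < Ω) (hb : 0 < b₁)
    (hne : (p + 1) * (p + 2) ≠ 0)
    (hnonneg : 0 ≤ p ^ 2 * A * Ω ^ p * b₁ ^ p / (2 * (p + 1) * (p + 2)))
    (hμ : μ ^ 2 = p ^ 2 * A * Ω ^ p * b₁ ^ p / (2 * (p + 1) * (p + 2)))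
    (hν : ν = -4 * μ ^ 3 / p ^ 2)
    (u : ℝ → ℝ → ℝ)
    (hu : ∀ x t : ℝ, u x t = Ω * b₁ / (Real.cosh (μ * x + ν * t)) ^ (2 / p)) :
    ∀ x t : ℝ,
      deriv (fun τ => u x τ) t + A * (u x t) ^ p * deriv (fun y => u y t) x
        + iteratedDeriv 3 (fun y => u y t) x = 0 :=
  stmt12_general p A Ω b₁ μ ν hp hΩ hb hne hμ hν u hu
end

section
/- Let p be a positive integer, and let A, b₁, μ, ν be real numbers with μ ≠ 0. Set a₂ = −ν/μ³ and a_{p+2} = −2·A·b₁^p / (μ²·(p+1)·(p+2)). Let g : ℝ → ℝ be three times differentiable and satisfy g″(ξ) = a₂·g(ξ) + ((p+2)/2)·a_{p+2}·g(ξ)^{p+1} for all ξ ∈ ℝ. Then u(x, t) = b₁·g(μx + νt) satisfies the generalized Korteweg–de Vries equation u_t + A·u^p·u_x + u_{xxx} = 0 for all (x, t) ∈ ℝ². -/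
/-!
With ξ = μx + νt, the chain rule gives `u_t = b₁ ν g'(ξ)`, `u_x = b₁ μ g'(ξ)` and
`u_xxx = b₁ μ³ g'''(ξ)`, while differentiating the ODE gives
`g''' = (a₂ + (p+2)(p+1)/2 · a_{p+2} gᵖ) g'`. Hence the gKdV expression is
`b₁ g'(ξ) (ν + μ³ a₂ + (A b₁ᵖ μ + μ³ (p+2)(p+1)/2 · a_{p+2}) g(ξ)ᵖ)`, and the choice of `a₂`
and `a_{p+2}` makes both coefficients in the last factor vanish.
-/

section Affine

variable {𝕜 : Type*} [NontriviallyNormedField 𝕜]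

theorem deriv_comp_mul_add (f : 𝕜 → 𝕜) (a c x : 𝕜) :
    deriv (fun y => f (a * y + c)) x = a * deriv f (a * x + c) := by
  simpa [deriv_comp_add_const] using deriv_comp_mul_left (f := fun z => f (z + c)) a x

theorem iteratedDeriv_comp_mul_add (n : ℕ) (f : 𝕜 → 𝕜) (a c : 𝕜) :
    iteratedDeriv n (fun y => f (a * y + c)) = fun y => a ^ n * iteratedDeriv n f (a * y + c) := by
  induction n with
  | zero => simp
  | succ n ih =>
    funext y
    rw [iteratedDeriv_succ, ih, deriv_const_mul_field, deriv_comp_mul_add, iteratedDeriv_succ]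
    ring

end Affine

theorem iteratedDeriv_three_of_deriv_deriv_eq {g : ℝ → ℝ} (hg : Differentiable ℝ g)
    {a c : ℝ} {n : ℕ} (h : ∀ ξ, deriv (deriv g) ξ = a * g ξ + c * g ξ ^ (n + 1)) (ξ : ℝ) :
    iteratedDeriv 3 g ξ = (a + c * (n + 1) * g ξ ^ n) * deriv g ξ := by
  have hderiv : HasDerivAt (fun ξ => a * g ξ + c * g ξ ^ (n + 1))
      (a * deriv g ξ + c * ((n + 1 : ℕ) * g ξ ^ n * deriv g ξ)) ξ :=
    ((hg ξ).hasDerivAt.const_mul a).add (((hg ξ).hasDerivAt.pow (n + 1)).const_mul c)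
  rw [iteratedDeriv_succ, iteratedDeriv_succ, iteratedDeriv_one, funext h, hderiv.deriv]
  push_cast
  ring

theorem stmt14_general (p : ℕ) (A b₁ μ ν : ℝ) (hμ : μ ≠ 0)
    (g : ℝ → ℝ)
    (hg1 : Differentiable ℝ g)
    (hode : ∀ ξ : ℝ, deriv (deriv g) ξ =
      (-ν / μ ^ 3) * g ξ
        + (((p : ℝ) + 2) / 2) * (-2 * A * b₁ ^ p / (μ ^ 2 * ((p : ℝ) + 1) * ((p : ℝ) + 2)))
            * g ξ ^ (p + 1))
    (u : ℝ → ℝ → ℝ) (hu : ∀ x t : ℝ, u x t = b₁ * g (μ * x + ν * t)) :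
    ∀ x t : ℝ,
      deriv (fun τ => u x τ) t + A * (u x t) ^ p * deriv (fun y => u y t) x
        + iteratedDeriv 3 (fun y => u y t) x = 0 := by
  intro x t
  have hu_x : (fun y => u y t) = fun y => b₁ * g (μ * y + ν * t) := funext (hu · t)
  have hu_t : (fun τ => u x τ) = fun τ => b₁ * g (ν * τ + μ * x) :=
    funext fun τ => by rw [hu, add_comm]
  have hg''' := iteratedDeriv_three_of_deriv_deriv_eq hg1 hode (μ * x + ν * t)
  rw [hu_t, hu_x, hu]
  simp only [deriv_const_mul_field, deriv_comp_mul_add, iteratedDeriv_const_mul_field,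
    iteratedDeriv_comp_mul_add]
  rw [add_comm (ν * t), hg''']
  field_simp
  ring

theorem stmt14 (p : ℕ) (hp : 0 < p) (A b₁ μ ν : ℝ) (hμ : μ ≠ 0)
    (g : ℝ → ℝ)
    (hg1 : Differentiable ℝ g) (hg2 : Differentiable ℝ (deriv g))
    (hg3 : Differentiable ℝ (deriv (deriv g)))
    (hode : ∀ ξ : ℝ, deriv (deriv g) ξ =
      (-ν / μ ^ 3) * g ξ
        + (((p : ℝ) + 2) / 2) * (-2 * A * b₁ ^ p / (μ ^ 2 * ((p : ℝ) + 1) * ((p : ℝ) + 2)))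
            * g ξ ^ (p + 1))
    (u : ℝ → ℝ → ℝ) (hu : ∀ x t : ℝ, u x t = b₁ * g (μ * x + ν * t)) :
    ∀ x t : ℝ,
      deriv (fun τ => u x τ) t + A * (u x t) ^ p * deriv (fun y => u y t) x
        + iteratedDeriv 3 (fun y => u y t) x = 0 :=
  stmt14_general p A b₁ μ ν hμ g hg1 hode u hu
end

section
/- Let α₀, α₁, α₂, α₃, α₄, α₅, a₀, a₁, a₂, a₃, b₀, b₁, μ, ν be real numbers satisfying the three algebraic equations: (E1) (3/2)α₁μ²a₃b₁ + 3α₂μ²a₃b₁ + α₃b₁² + (45/2)α₅μ⁴a₃² = 0; (E2) 15α₅μ⁴a₂a₃ + α₁μ²a₂b₁ + α₂μ²a₂b₁ + 3α₂μ²a₃b₀ + 3α₄μ²a₃ + 2α₃b₀b₁ + α₀b₁ = 0; (E3) ν + μ + α₀μb₀ + (1/2)α₁μ³a₁b₁ + α₂μ³a₂b₀ + α₃μb₀² + α₄μ³a₂ + α₅μ⁵((9/2)a₁a₃ + a₂²) = 0. Let g : ℝ → ℝ be infinitely differentiable and satisfy, for all ξ ∈ ℝ, (g′(ξ))² = a₀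 + a₁g(ξ) + a₂g(ξ)² + a₃g(ξ)³ and g″(ξ) = (1/2)(a₁ + 2a₂g(ξ) + 3a₃g(ξ)²). Then u(x, t) = b₀ + b₁·g(μx + νt) satisfies the higher-order Korteweg–de Vries (Olver) equation u_t + u_x + α₀·u·u_x + α₁·u_x·u_{xx} + α₂·u·u_{xxx} + α₃·u²·u_x + α₄·u_{xxx} + α₅·u_{xxxxx} = 0 for all (x, t) ∈ ℝ². -/
private lemma stepAux (d : ℝ → ℝ) (hd : Differentiable ℝ d) (A B k c y : ℝ) :
    deriv (fun z => B + A * d (k * z + c)) y = A * k * deriv d (k * y + c) := by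
  have hlin : HasDerivAt (fun z : ℝ => k * z + c) k y := by
    simpa using ((hasDerivAt_id y).const_mul k).add_const c
  have h := (((hd (k * y + c)).hasDerivAt.comp y hlin).const_mul A).const_add B
  have h' : HasDerivAt (fun z => B + A * d (k * z + c))
      (A * (deriv d (k * y + c) * k)) y := h
  rw [h'.deriv]; ring

private lemma polyDerivAux (G : ℝ → ℝ) (p q r s ξ D : ℝ) (hG : HasDerivAt G D ξ) :
    HasDerivAt (fun z => p + q * G z + r * G z ^ 2 + s * G z ^ 3)
      ((q + 2 * r * G ξ + 3 * s * G ξ ^ 2) * D) ξ := by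
  have h := (((hG.const_mul q).const_add p).add ((hG.pow 2).const_mul r)).add
    ((hG.pow 3).const_mul s)
  have h' : HasDerivAt (fun z => p + q * G z + r * G z ^ 2 + s * G z ^ 3)
      (q * D + r * (((2 : ℕ) : ℝ) * G ξ ^ (2 - 1) * D) + s * (((3 : ℕ) : ℝ) * G ξ ^ (3 - 1) * D)) ξ := h
  convert h' using 1
  push_cast; ring

theorem stmt18 (α₀ α₁ α₂ α₃ α₄ α₅ a₀ a₁ a₂ a₃ b₀ b₁ μ ν : ℝ)
    (hE1 : (3 / 2) * α₁ * μ ^ 2 * a₃ * b₁ + 3 * α₂ * μ ^ 2 * a₃ * b₁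
      + α₃ * b₁ ^ 2 + (45 / 2) * α₅ * μ ^ 4 * a₃ ^ 2 = 0)
    (hE2 : 15 * α₅ * μ ^ 4 * a₂ * a₃ + α₁ * μ ^ 2 * a₂ * b₁ + α₂ * μ ^ 2 * a₂ * b₁
      + 3 * α₂ * μ ^ 2 * a₃ * b₀ + 3 * α₄ * μ ^ 2 * a₃ + 2 * α₃ * b₀ * b₁ + α₀ * b₁ = 0)
    (hE3 : ν + μ + α₀ * μ * b₀ + (1 / 2) * α₁ * μ ^ 3 * a₁ * b₁ + α₂ * μ ^ 3 * a₂ * b₀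
      + α₃ * μ * b₀ ^ 2 + α₄ * μ ^ 3 * a₂
      + α₅ * μ ^ 5 * ((9 / 2) * a₁ * a₃ + a₂ ^ 2) = 0)
    (g : ℝ → ℝ) (hg : ContDiff ℝ (⊤ : ℕ∞) g)
    (hg1 : ∀ ξ : ℝ, (deriv g ξ) ^ 2 = a₀ + a₁ * g ξ + a₂ * (g ξ) ^ 2 + a₃ * (g ξ) ^ 3)
    (hg2 : ∀ ξ : ℝ, deriv (deriv g) ξ = (1 / 2) * (a₁ + 2 * a₂ * g ξ + 3 * a₃ * (g ξ) ^ 2))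
    (u : ℝ → ℝ → ℝ) (hu : ∀ x t : ℝ, u x t = b₀ + b₁ * g (μ * x + ν * t)) :
    ∀ x t : ℝ,
      deriv (fun τ => u x τ) t + deriv (fun y => u y t) x
        + α₀ * u x t * deriv (fun y => u y t) x
        + α₁ * deriv (fun y => u y t) x * iteratedDeriv 2 (fun y => u y t) x
        + α₂ * u x t * iteratedDeriv 3 (fun y => u y t) x
        + α₃ * (u x t) ^ 2 * deriv (fun y => u y t) x
        + α₄ * iteratedDeriv 3 (fun y => u y t) x
        + α₅ * iteratedDeriv 5 (fun y => u y t) x = 0 := by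
  intro x t
  have hgd : Differentiable ℝ g := hg.differentiable (by simp)
  have hg' :=
    (contDiff_infty_iff_deriv.mp (hg.of_le (by simp))).2
  have hgd1 : Differentiable ℝ (deriv g) := hg'.differentiable (by simp)
  -- function-level formulas for higher derivatives of g
  have e2 : deriv (deriv g)
      = fun z => a₁ / 2 + a₂ * g z + (3 * a₃ / 2) * g z ^ 2 + 0 * g z ^ 3 := by
    funext z; rw [hg2 z]; ring
  have h3 : ∀ z, deriv (deriv (deriv g)) z = (a₂ + 3 * a₃ * g z) * deriv g z := by
    intro z
    rw [e2, (polyDerivAux g (a₁ / 2) a₂ (3 * a₃ / 2) 0 z (deriv g z)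
      (hgd z).hasDerivAt).deriv]
    ring
  have e3 : deriv (deriv (deriv g)) = fun z => (a₂ + 3 * a₃ * g z) * deriv g z :=
    funext h3
  have h4 : ∀ z, deriv (deriv (deriv (deriv g))) z
      = (a₁ * a₂ / 2 + 3 * a₀ * a₃) + (a₂ ^ 2 + (9 / 2) * a₁ * a₃) * g z
        + ((15 / 2) * a₂ * a₃) * g z ^ 2 + ((15 / 2) * a₃ ^ 2) * g z ^ 3 := by
    intro z
    rw [e3]
    have hmul : HasDerivAt (fun w => (a₂ + 3 * a₃ * g w) * deriv g w)
        ((3 * a₃ * deriv g z) * deriv g z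
          + (a₂ + 3 * a₃ * g z) * deriv (deriv g) z) z :=
      (((hgd z).hasDerivAt.const_mul (3 * a₃)).const_add a₂).mul (hgd1 z).hasDerivAt
    rw [hmul.deriv, hg2 z]
    linear_combination 3 * a₃ * hg1 z
  have e4 : deriv (deriv (deriv (deriv g)))
      = fun z => (a₁ * a₂ / 2 + 3 * a₀ * a₃) + (a₂ ^ 2 + (9 / 2) * a₁ * a₃) * g z
        + ((15 / 2) * a₂ * a₃) * g z ^ 2 + ((15 / 2) * a₃ ^ 2) * g z ^ 3 := funext h4
  have h5 : ∀ z, deriv (deriv (deriv (deriv (deriv g)))) z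
      = ((a₂ ^ 2 + (9 / 2) * a₁ * a₃) + 15 * a₂ * a₃ * g z
          + (45 / 2) * a₃ ^ 2 * g z ^ 2) * deriv g z := by
    intro z
    rw [e4, (polyDerivAux g (a₁ * a₂ / 2 + 3 * a₀ * a₃) (a₂ ^ 2 + (9 / 2) * a₁ * a₃)
      ((15 / 2) * a₂ * a₃) ((15 / 2) * a₃ ^ 2) z (deriv g z) (hgd z).hasDerivAt).deriv]
    ring
  -- differentiability of higher derivatives
  have d2d : Differentiable ℝ (deriv (deriv g)) := by rw [e2]; fun_prop
  have d3d : Differentiable ℝ (deriv (deriv (deriv g))) := by rw [e3]; fun_prop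
  have d4d : Differentiable ℝ (deriv (deriv (deriv (deriv g)))) := by rw [e4]; fun_prop
  -- derivatives of the profile in x
  set F : ℝ → ℝ := fun y => b₀ + b₁ * g (μ * y + ν * t) with hF
  have f1 : deriv F = fun y => 0 + (b₁ * μ) * deriv g (μ * y + ν * t) := by
    funext y; rw [hF, stepAux g hgd b₁ b₀ μ (ν * t) y]; ring
  have f2 : deriv (deriv F)
      = fun y => 0 + (b₁ * μ ^ 2) * deriv (deriv g) (μ * y + ν * t) := by
    funext y; rw [f1, stepAux (deriv g) hgd1 (b₁ * μ) 0 μ (ν * t) y]; ring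
  have f3 : deriv (deriv (deriv F))
      = fun y => 0 + (b₁ * μ ^ 3) * deriv (deriv (deriv g)) (μ * y + ν * t) := by
    funext y; rw [f2, stepAux (deriv (deriv g)) d2d (b₁ * μ ^ 2) 0 μ (ν * t) y]; ring
  have f4 : deriv (deriv (deriv (deriv F)))
      = fun y => 0 + (b₁ * μ ^ 4) * deriv (deriv (deriv (deriv g))) (μ * y + ν * t) := by
    funext y
    rw [f3, stepAux (deriv (deriv (deriv g))) d3d (b₁ * μ ^ 3) 0 μ (ν * t) y]; ring
  have f5 : deriv (deriv (deriv (deriv (deriv F))))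
      = fun y => 0 + (b₁ * μ ^ 5)
          * deriv (deriv (deriv (deriv (deriv g)))) (μ * y + ν * t) := by
    funext y
    rw [f4, stepAux (deriv (deriv (deriv (deriv g)))) d4d (b₁ * μ ^ 4) 0 μ (ν * t) y]
    ring
  -- time derivative
  have ht : deriv (fun τ => u x τ) t = b₁ * ν * deriv g (μ * x + ν * t) := by
    have : (fun τ => u x τ) = fun τ => b₀ + b₁ * g (ν * τ + μ * x) := by
      funext τ; rw [hu]; ring_nf
    rw [this, stepAux g hgd b₁ b₀ ν (μ * x) t, add_comm (ν * t) (μ * x)]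
  have hux : (fun y => u y t) = F := by funext y; rw [hu]
  have i2 : iteratedDeriv 2 F = deriv (deriv F) := by
    rw [show (2 : ℕ) = 1 + 1 from rfl, iteratedDeriv_succ, iteratedDeriv_one]
  have i3 : iteratedDeriv 3 F = deriv (deriv (deriv F)) := by
    rw [show (3 : ℕ) = 2 + 1 from rfl, iteratedDeriv_succ, i2]
  have i5 : iteratedDeriv 5 F = deriv (deriv (deriv (deriv (deriv F)))) := by
    rw [show (5 : ℕ) = 4 + 1 from rfl, iteratedDeriv_succ,
      show (4 : ℕ) = 3 + 1 from rfl, iteratedDeriv_succ, i3]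
  rw [hux, ht, i2, i3, i5, f5, f3, f2, f1, hu x t]
  simp only
  rw [hg2 (μ * x + ν * t), h3 (μ * x + ν * t), h5 (μ * x + ν * t)]
  linear_combination (b₁ * deriv g (μ * x + ν * t)) * hE3
    + (b₁ * μ * deriv g (μ * x + ν * t) * g (μ * x + ν * t)) * hE2
    + (b₁ * μ * deriv g (μ * x + ν * t) * g (μ * x + ν * t) ^ 2) * hE1
end

section
/- Let α₀, α₁, α₂, α₃, α₄, α₅, b₀, b₁, μ, ν and Ω ≠ 0 be real numbers satisfying: (E1) −6α₁μ²b₁/Ω − 12α₂μ²b₁/Ω + α₃b₁² + 360α₅μ⁴/Ω² = 0; (E2) −240α₅μ⁴/Ω + 4α₁μ²b₁ + 4α₂μ²b₁ − 12α₂μ²b₀/Ω − 12α₄μ²/Ω + 2α₃b₀b₁ + α₀b₁ = 0; (E3) ν + μ + α₀μb₀ + 4α₂μ³b₀ + α₃μb₀² + 4α₄μ³ + 16α₅μ⁵ = 0. Then u(x, t) = b₀ + b₁·Ω/cosh²(μx + νt) satisfies the higher-order Korteweg–de Vries (Olver) equation u_t + u_x + α₀·u·u_x + α₁·u_x·u_{xx}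 + α₂·u·u_{xxx} + α₃·u²·u_x + α₄·u_{xxx} + α₅·u_{xxxxx} = 0 for all (x, t) ∈ ℝ². -/
/-!
Since `tanh' = 1 - tanh²` and `sech² = 1 - tanh²`, every `x`-derivative of
`u = b₀ + b₁ Ω sech²(μ x + ν t)` is a polynomial in `T = tanh (μ x + ν t)`, obtained from the previous
one by `p ↦ μ (1 - X²) p'`; likewise `u_t` with `ν` in place of `μ`. The left-hand side of the equation
is therefore a polynomial in `T`, and it is a combination of (E1)–(E3) with polynomial coefficients.
-/

open Real Polynomial

theorem Real.one_sub_tanh_sq (x : ℝ) : 1 - tanh x ^ 2 = (cosh x ^ 2)⁻¹ := by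
  have hc : cosh x ≠ 0 := (cosh_pos x).ne'
  have h := cosh_sq_sub_sinh_sq x
  rw [tanh_eq_sinh_div_cosh]
  field_simp
  linarith

theorem Real.hasDerivAt_tanh (x : ℝ) : HasDerivAt tanh (1 - tanh x ^ 2) x := by
  have hc : cosh x ≠ 0 := (cosh_pos x).ne'
  have htanh : sinh / cosh = tanh := funext fun y => (tanh_eq_sinh_div_cosh y).symm
  have h := (hasDerivAt_sinh x).div (hasDerivAt_cosh x) hc
  rw [htanh] at h
  refine h.congr_deriv ?_
  rw [sub_div, ← sq, ← sq, div_self (pow_ne_zero 2 hc), ← div_pow, ← tanh_eq_sinh_div_cosh]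

noncomputable def tanhDeriv (a : ℝ) (p : ℝ[X]) : ℝ[X] := C a * (1 - X ^ 2) * derivative p

theorem hasDerivAt_eval_tanh (p : ℝ[X]) (a b y : ℝ) :
    HasDerivAt (fun y => p.eval (tanh (a * y + b))) ((tanhDeriv a p).eval (tanh (a * y + b))) y := by
  have hlin : HasDerivAt (fun y => a * y + b) a y := by
    simpa using ((hasDerivAt_id y).const_mul a).add_const b
  refine ((p.hasDerivAt _).comp y ((hasDerivAt_tanh _).comp y hlin)).congr_deriv ?_
  simp only [tanhDeriv, eval_mul, eval_C, eval_sub, eval_one, eval_pow, eval_X, Function.comp_apply]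
  ring

theorem iteratedDeriv_eval_tanh (p : ℝ[X]) (a b : ℝ) (n : ℕ) :
    iteratedDeriv n (fun y => p.eval (tanh (a * y + b)))
      = fun y => ((tanhDeriv a)^[n] p).eval (tanh (a * y + b)) := by
  induction n with
  | zero => rfl
  | succ n ih =>
    rw [iteratedDeriv_succ, ih, Function.iterate_succ_apply']
    exact funext fun y => (hasDerivAt_eval_tanh _ a b y).deriv

theorem stmt19 (α₀ α₁ α₂ α₃ α₄ α₅ b₀ b₁ μ ν Ω : ℝ) (hΩ : Ω ≠ 0)
    (hE1 : -6 * α₁ * μ ^ 2 * b₁ / Ω - 12 * α₂ * μ ^ 2 * b₁ / Ω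
      + α₃ * b₁ ^ 2 + 360 * α₅ * μ ^ 4 / Ω ^ 2 = 0)
    (hE2 : -240 * α₅ * μ ^ 4 / Ω + 4 * α₁ * μ ^ 2 * b₁ + 4 * α₂ * μ ^ 2 * b₁
      - 12 * α₂ * μ ^ 2 * b₀ / Ω - 12 * α₄ * μ ^ 2 / Ω + 2 * α₃ * b₀ * b₁ + α₀ * b₁ = 0)
    (hE3 : ν + μ + α₀ * μ * b₀ + 4 * α₂ * μ ^ 3 * b₀ + α₃ * μ * b₀ ^ 2
      + 4 * α₄ * μ ^ 3 + 16 * α₅ * μ ^ 5 = 0)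
    (u : ℝ → ℝ → ℝ)
    (hu : ∀ x t : ℝ, u x t = b₀ + b₁ * Ω / (Real.cosh (μ * x + ν * t)) ^ 2) :
    ∀ x t : ℝ,
      deriv (fun τ => u x τ) t + deriv (fun y => u y t) x
        + α₀ * u x t * deriv (fun y => u y t) x
        + α₁ * deriv (fun y => u y t) x * iteratedDeriv 2 (fun y => u y t) x
        + α₂ * u x t * iteratedDeriv 3 (fun y => u y t) x
        + α₃ * (u x t) ^ 2 * deriv (fun y => u y t) x
        + α₄ * iteratedDeriv 3 (fun y => u y t) x
        + α₅ * iteratedDeriv 5 (fun y => u y t) x = 0 := by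
  intro x t
  set p : ℝ[X] := C (b₀ + b₁ * Ω) - C (b₁ * Ω) * X ^ 2
  have hprofile : ∀ y τ, u y τ = p.eval (tanh (μ * y + ν * τ)) := fun y τ => by
    rw [hu, div_eq_mul_inv, ← one_sub_tanh_sq]
    simp only [p, eval_sub, eval_mul, eval_C, eval_pow, eval_X]
    ring
  have hspace : (fun y => u y t) = fun y => p.eval (tanh (μ * y + ν * t)) :=
    funext fun y => hprofile y t
  have htime : (fun τ => u x τ) = fun τ => p.eval (tanh (ν * τ + μ * x)) :=
    funext fun τ => by rw [hprofile, add_comm]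
  simp only [hspace, htime, ← iteratedDeriv_one, iteratedDeriv_eval_tanh]
  rw [add_comm (ν * t)]
  simp only [p, Function.iterate_succ_apply', Function.iterate_zero_apply, tanhDeriv,
    derivative_sub, derivative_neg, derivative_mul, derivative_C, derivative_one, derivative_X,
    derivative_X_pow_succ, Nat.cast_one, map_add, map_one, pow_one, zero_add, zero_sub, add_zero,
    zero_mul, mul_zero, mul_one, mul_neg, neg_mul, neg_add_rev, neg_neg,
    eval_mul, eval_C, eval_sub, eval_one, eval_pow, eval_X, eval_add, eval_neg]
  set T := tanh (μ * x + ν * t)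
  -- With `g = Ω (1 - T²) = Ω sech²` and `g' = -2 g T`, the left-hand side is
  -- `b₁ g' (E3 + μ g E2 + μ g² E1)`.
  linear_combination (norm := skip) b₁ * Ω * (-2 * T + 2 * T ^ 3)
    * (hE3 + μ * Ω * (1 - T ^ 2) * hE2 + μ * Ω ^ 2 * (1 - T ^ 2) ^ 2 * hE1)
  field_simp
  ring
end
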